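/- Let w be a Fink–Mao region word. Then under the reductions of the Reduction Lemma, w reduces to a normal form that is either the empty word or a word of the form [L] ++ u ++ [C, x] with x ∈ {L, R}. Moreover, if w has length k then its normal form has length at most k − 1. -/

import Mathlib

/-- A region of the tie diagram: left, right, or center. -/
inductive Region : Type
  | L | R | C
deriving DecidableEq

open Region

/-- A Fink–Mao region word: a list of letters from {L, R, C} with consecutive
letters distinct, first letter `L`, ending with the suffix `L,R,C` or `R,L,C`. -/
def FMWord (w : List Region) : Prop :=
  w.Chain' (· ≠ ·) ∧ w.head? = some L ∧
    ([L, R, C] <:+ w ∨ [R, L, C] <:+ w)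

/-- Swap `L` and `R` (fixing `C`). -/
def other : Region → Region
  | L => R
  | R => L
  | C => C

/-- `altWord s n` is the alternating word of length `n` starting with letter `s`. -/
def altWord : Region → ℕ → List Region
  | _, 0 => []
  | s, n + 1 => s :: altWord (other s) n

/-- One step of the reductions 0–IV of the Reduction Lemma, on region words. -/
inductive Red : List Region → List Region → Prop
  | red0 : Red [L, R, C] []
  | red1 (w : List Region) (X Y t : Region) :
      ((X = L ∧ Y = R) ∨ (X = R ∧ Y = L)) → (t = L ∨ t = R) →
      Red (w ++ [X, Y, X, C]) (w ++ [X, C, t])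
  | red2 (w : List Region) (X Y : Region) :
      ((X = L ∧ Y = R) ∨ (X = R ∧ Y = L)) → Red (w ++ [C, X, Y, C]) w
  | red3 (s : Region) (n : ℕ) : (s = L ∨ s = R) → Red (altWord s (n + 1)) []
  | red4 (w : List Region) (s : Region) (n : ℕ) :
      (s = L ∨ s = R) → Red (w ++ [C] ++ altWord s (n + 2)) (w ++ [C, s])


/-!
A region word ends in `X, Y, C` with `{X, Y} = {L, R}`. Either this is the whole word
(reduction 0), or the letter before it is `Y` (reduction I, which already yields a normal
form), or it is `C` (reduction II). In the last case what remains starts with `L`, does not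
end in `C`, and hence ends in a nonempty alternating block after its last `C`: reduction III
or IV collapses that block, leaving either the empty word or `… C x`. Every step shortens
the word.
-/

def IsNormalForm (v : List Region) : Prop :=
  v = [] ∨ ∃ (u : List Region) (x : Region), (x = L ∨ x = R) ∧ v = L :: (u ++ [C, x])

def ReducesToNormalForm (w : List Region) (n : ℕ) : Prop :=
  ∃ v, Relation.ReflTransGen Red w v ∧ IsNormalForm v ∧ v.length ≤ n

theorem isNormalForm_append {p : List Region} {x : Region} (hp : p.head? = some L)
    (hx : x = L ∨ x = R) : IsNormalForm (p ++ [C, x]) := by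
  obtain ⟨a, u, rfl⟩ := List.exists_cons_of_ne_nil (fun h : p = [] => by simp [h] at hp)
  obtain rfl : a = L := by simpa using hp
  exact Or.inr ⟨u, x, hx, rfl⟩

namespace ReducesToNormalForm

theorem of_isNormalForm {v : List Region} {n : ℕ} (hv : IsNormalForm v) (hn : v.length ≤ n) :
    ReducesToNormalForm v n :=
  ⟨v, .refl, hv, hn⟩

theorem of_reflTransGen {w w' : List Region} {n : ℕ} (hw : Relation.ReflTransGen Red w w')
    (h : ReducesToNormalForm w' n) : ReducesToNormalForm w n :=
  let ⟨v, hv, hnf, hlen⟩ := h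
  ⟨v, hw.trans hv, hnf, hlen⟩

theorem mono {w : List Region} {m n : ℕ} (h : ReducesToNormalForm w m) (hmn : m ≤ n) :
    ReducesToNormalForm w n :=
  let ⟨v, hv, hnf, hlen⟩ := h
  ⟨v, hv, hnf, hlen.trans hmn⟩

end ReducesToNormalForm

theorem eq_other_of_ne {s a : Region} (hs : s ≠ C) (ha : a ≠ C) (h : a ≠ s) :
    a = other s := by
  cases s <;> cases a <;> simp_all [other]

theorem eq_altWord_of_isChain :
    ∀ {f : List Region} {s : Region}, f.IsChain (· ≠ ·) → C ∉ f → f.head? = some s →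
      f = altWord s f.length
  | [a], _, _, _, h => by simp_all [altWord]
  | a :: b :: l, _, hc, hC, h => by
    obtain rfl : a = _ := by simpa using h
    rw [List.isChain_cons_cons] at hc
    have hb : b = other a :=
      eq_other_of_ne (fun h => hC (h ▸ by simp)) (fun h => hC (h ▸ by simp)) hc.1.symm
    rw [List.length_cons, altWord, ← eq_altWord_of_isChain hc.2 (fun h => hC (by simp_all))
      (by simp [hb])]

theorem exists_split_after_last_C (v : List Region) :
    ∃ u f, v = u ++ f ∧ C ∉ f ∧ (u = [] ∨ ∃ u', u = u' ++ [C]) := by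
  induction v using List.reverseRecOn with
  | nil => exact ⟨[], [], rfl, by simp, Or.inl rfl⟩
  | append_singleton v a ih =>
    by_cases ha : a = C
    · exact ⟨v ++ [a], [], by simp, by simp, Or.inr ⟨v, by rw [ha]⟩⟩
    · obtain ⟨u, f, rfl, hf, hu⟩ := ih
      exact ⟨u, f ++ [a], by simp, by simp [hf, Ne.symm ha], hu⟩

theorem reflTransGen_red_altWord (w : List Region) {s : Region} (hs : s = L ∨ s = R) (n : ℕ) :
    Relation.ReflTransGen Red (w ++ [C] ++ altWord s (n + 1)) (w ++ [C, s]) := by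
  cases n with
  | zero => simp [altWord, Relation.ReflTransGen.refl]
  | succ n => exact .single (Red.red4 w s n hs)

theorem reducesToNormalForm_of_getLast?_ne_C {q : List Region} (hc : q.IsChain (· ≠ ·))
    (hh : q.head? = some L) (hl : q.getLast? ≠ some C) : ReducesToNormalForm q q.length := by
  obtain ⟨u, f, rfl, hf, hu⟩ := exists_split_after_last_C q
  obtain ⟨s, f', rfl⟩ : ∃ s f', f = s :: f' := by
    refine List.exists_cons_of_ne_nil fun hf => ?_
    rcases hu with rfl | ⟨u', rfl⟩ <;> simp_all
  have hs : s = L ∨ s = R := by cases s <;> simp_all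
  have halt : s :: f' = altWord s (f'.length + 1) :=
    eq_altWord_of_isChain (hc.suffix (List.suffix_append _ _)) hf (by simp)
  rcases hu with rfl | ⟨u', rfl⟩
  · rw [List.nil_append, halt]
    exact .of_reflTransGen (.single (Red.red3 s _ hs)) (.of_isNormalForm (Or.inl rfl) (by simp))
  · have hu' : u'.head? = some L := by
      rcases u' with _ | ⟨a, u'⟩ <;> simp_all
    rw [halt]
    exact .of_reflTransGen (reflTransGen_red_altWord u' hs _)
      (.of_isNormalForm (isNormalForm_append hu' hs) (by simp [altWord]))

theorem reducesToNormalForm_append_YXYC {q : List Region} {X Y : Region}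
    (hXY : (X = L ∧ Y = R) ∨ (X = R ∧ Y = L)) (hh : (q ++ [Y]).head? = some L) :
    ReducesToNormalForm (q ++ [Y, X, Y, C]) (q.length + 3) :=
  .of_reflTransGen (.single (Red.red1 q Y X L (hXY.symm.imp And.symm And.symm) (.inl rfl)))
    (.of_isNormalForm (by simpa using isNormalForm_append hh (.inl rfl)) (by simp))

theorem reducesToNormalForm_append_CXYC {q : List Region} {X Y : Region}
    (hXY : (X = L ∧ Y = R) ∨ (X = R ∧ Y = L)) (hc : (q ++ [C, X, Y, C]).IsChain (· ≠ ·))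
    (hh : (q ++ [C]).head? = some L) : ReducesToNormalForm (q ++ [C, X, Y, C]) q.length := by
  have hq : q ≠ [] := by rintro rfl; simp at hh
  have hql : q.getLast? ≠ some C := fun h => by simp_all [List.isChain_append]
  rw [List.head?_append_of_ne_nil _ hq] at hh
  exact .of_reflTransGen (.single (Red.red2 q X Y hXY))
    (reducesToNormalForm_of_getLast?_ne_C (hc.prefix (List.prefix_append _ _)) hh hql)

theorem reducesToNormalForm_append_XYC {p : List Region} {X Y : Region}
    (hXY : (X = L ∧ Y = R) ∨ (X = R ∧ Y = L)) (hc : (p ++ [X, Y, C]).IsChain (· ≠ ·))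
    (hh : (p ++ [X, Y, C]).head? = some L) :
    ReducesToNormalForm (p ++ [X, Y, C]) (p.length + 2) := by
  rcases p.eq_nil_or_concat' with rfl | ⟨q, a, rfl⟩
  · obtain ⟨rfl, rfl⟩ : X = L ∧ Y = R := by rcases hXY with _ | ⟨rfl, _⟩ <;> simp_all
    exact .of_reflTransGen (.single Red.red0) (.of_isNormalForm (Or.inl rfl) (Nat.zero_le _))
  have hqa : (q ++ [a]).head? = some L := by simpa using hh
  rw [List.append_assoc, List.singleton_append] at hc ⊢
  have ha : a = Y ∨ a = C := by
    rcases hXY with ⟨rfl, rfl⟩ | ⟨rfl, rfl⟩ <;> cases a <;> simp_all [List.isChain_append]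
  rcases ha with rfl | rfl
  · exact (reducesToNormalForm_append_YXYC hXY hqa).mono (by simp)
  · exact (reducesToNormalForm_append_CXYC hXY hc hqa).mono
      (by simp only [List.length_append, List.length_singleton]; omega)

/-- Every Fink–Mao region word reduces to a normal form that is either empty or of
the form `[L] ++ u ++ [C, x]` with `x ∈ {L, R}`; if the word has length `k`, the
normal form has length at most `k - 1`. -/
theorem reduce_to_normal_form (w : List Region) (hw : FMWord w) :
    ∃ v : List Region, Relation.ReflTransGen Red w v ∧
      (v = [] ∨ ∃ (u : List Region) (x : Region), (x = L ∨ x = R) ∧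
        v = L :: (u ++ [C, x])) ∧
      v.length ≤ w.length - 1 := by
  obtain ⟨hc, hh, ⟨p, rfl⟩ | ⟨p, rfl⟩⟩ := hw
  · exact (reducesToNormalForm_append_XYC (.inl ⟨rfl, rfl⟩) hc hh).mono (by simp)
  · exact (reducesToNormalForm_append_XYC (.inr ⟨rfl, rfl⟩) hc hh).mono (by simp)
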